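/- Let H be a finite bipartite graph with parts X and T in which every vertex of T has a neighbor, and suppose A ⊆ T is a set of minimum cardinality with |N_H(A)| < |A|. Then the induced subgraph on A ∪ N_H(A) contains a matching saturating N_H(A). -/

import Mathlib

open SimpleGraph

namespace VizingTwoFactor

variable {V : Type*}

/-- The degree of a vertex, as the `ncard` of its neighbor set. -/
noncomputable def ndeg (G : SimpleGraph V) (v : V) : ℕ :=
  (G.neighborSet v).ncard

/-- `G` is bipartite with parts `X` and `T`. -/
def IsBipartiteWith (G : SimpleGraph V) (X T : Set V) : Prop :=
  Disjoint X T ∧ ∀ u v : V, G.Adj u v → (u ∈ X ∧ v ∈ T) ∨ (u ∈ T ∧ v ∈ X)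

/-- The set of neighbors of a set of vertices. -/
def NSet (G : SimpleGraph V) (A : Set V) : Set V :=
  {v | ∃ a ∈ A, G.Adj a v}

/-- `G` has a matching saturating the vertex set `T`. -/
def HasMatchingSaturating (G : SimpleGraph V) (T : Set V) : Prop :=
  ∃ M : G.Subgraph, M.IsMatching ∧ T ⊆ M.verts

/-- Number of (ordered) adjacent pairs with first coordinate in `A` and second in `B`;
for disjoint `A`, `B` this is the number of edges between `A` and `B`. -/
noncomputable def eBetween (G : SimpleGraph V) (A B : Set V) : ℕ :=
  {p : V × V | p.1 ∈ A ∧ p.2 ∈ B ∧ G.Adj p.1 p.2}.ncard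

/-- Number of neighbors of `v` inside `A`. -/
noncomputable def degIn (G : SimpleGraph V) (A : Set V) (v : V) : ℕ :=
  (G.neighborSet v ∩ A).ncard

/-- The vertex set (in `V`) of a connected component of an induced subgraph. -/
def csupp (G : SimpleGraph V) (U : Set V) (C : (G.induce U).ConnectedComponent) : Set V :=
  Subtype.val '' C.supp

/-- The odd components of `G − (S ∪ T)` w.r.t. `(S,T)`: components sending an odd
number of edges to `T`. -/
noncomputable def oddComps (G : SimpleGraph V) (S T : Set V) :
    Set ((G.induce (S ∪ T)ᶜ).ConnectedComponent) :=
  {C | Odd (eBetween G (csupp G (S ∪ T)ᶜ C) T)}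

/-- `h_G(S,T)`: the number of odd components. -/
noncomputable def hNum (G : SimpleGraph V) (S T : Set V) : ℕ :=
  (oddComps G S T).ncard

/-- `δ_G(S,T) = 2|S| + Σ_{v∈T} deg_{G−S}(v) − 2|T| − h_G(S,T)`. -/
noncomputable def deltaST (G : SimpleGraph V) (S T : Set V) : ℤ :=
  2 * S.ncard + (∑ᶠ v ∈ T, (degIn G Sᶜ v : ℤ)) - 2 * T.ncard - hNum G S T

/-- A barrier. -/
def IsBarrier (G : SimpleGraph V) (S T : Set V) : Prop :=
  Disjoint S T ∧ deltaST G S T ≤ -2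

/-- A minimum barrier: minimizes `|S ∪ T|` among barriers. -/
def IsMinBarrier (G : SimpleGraph V) (S T : Set V) : Prop :=
  IsBarrier G S T ∧ ∀ S' T' : Set V, IsBarrier G S' T' → (S ∪ T).ncard ≤ (S' ∪ T').ncard

/-- `G` has a 2-factor: a spanning subgraph in which every vertex has degree 2. -/
def HasTwoFactor (G : SimpleGraph V) : Prop :=
  ∃ H : SimpleGraph V, H ≤ G ∧ ∀ v : V, ndeg H v = 2

/-- `G` has a proper edge coloring with `k` colors. -/
def HasEdgeColoring (G : SimpleGraph V) (k : ℕ) : Prop :=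
  ∃ f : G.edgeSet → Fin k, ∀ e₁ e₂ : G.edgeSet, e₁ ≠ e₂ →
    (∃ v : V, v ∈ (e₁ : Sym2 V) ∧ v ∈ (e₂ : Sym2 V)) → f e₁ ≠ f e₂

/-- The chromatic index `χ'(G)`. -/
noncomputable def chromIdx (G : SimpleGraph V) : ℕ :=
  sInf {k | HasEdgeColoring G k}

/-- `Δ` is the maximum degree of `G`. -/
def IsMaxDegree (G : SimpleGraph V) (Δ : ℕ) : Prop :=
  (∀ v : V, ndeg G v ≤ Δ) ∧ ∃ v : V, ndeg G v = Δ

/-- `G` is `Δ`-critical: no isolated vertices, maximum degree `Δ`, `χ'(G) = Δ + 1`, and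
`χ'(G − e) = Δ` for every edge `e`. -/
def IsDeltaCritical (G : SimpleGraph V) (Δ : ℕ) : Prop :=
  (∀ v : V, ∃ u : V, G.Adj v u) ∧ IsMaxDegree G Δ ∧ chromIdx G = Δ + 1 ∧
    ∀ e ∈ G.edgeSet, chromIdx (G.deleteEdges {e}) = Δ

/-- `T` is an independent set in `G`. -/
def IsIndep (G : SimpleGraph V) (T : Set V) : Prop :=
  ∀ u ∈ T, ∀ v ∈ T, ¬ G.Adj u v

/-- The bipartite graph `H*` consisting of the edges of `G` between `V(G) \ T` and `T`. -/
def betweenGraph (G : SimpleGraph V) (T : Set V) : SimpleGraph V where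
  Adj u v := G.Adj u v ∧ ((u ∉ T ∧ v ∈ T) ∨ (u ∈ T ∧ v ∉ T))
  symm := ⟨fun u v (h : G.Adj u v ∧ ((u ∉ T ∧ v ∈ T) ∨ (u ∈ T ∧ v ∉ T))) =>
    ⟨h.1.symm, h.2.elim (fun h' => Or.inr ⟨h'.2, h'.1⟩)
    (fun h' => Or.inl ⟨h'.2, h'.1⟩)⟩⟩
  loopless := ⟨fun u h => G.loopless.irrefl u h.1⟩

/-!
Minimality of `A` forces Hall's condition from `N(A)` towards `A`: if some `B ⊆ N(A)` had
fewer than `|B|` neighbours in `A`, then `A \ N(B)` (nonempty, and with neighbourhood inside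
`N(A) \ B`) would be a strictly smaller deficient set. Hall's theorem in the bipartite graph
induced on `A ∪ N(A)` then gives the matching.
-/

theorem isBipartiteWith_iff {G : SimpleGraph V} {X T : Set V} :
    IsBipartiteWith G X T ↔ G.IsBipartiteWith X T :=
  ⟨fun ⟨hd, hadj⟩ => ⟨hd, hadj⟩, fun ⟨hd, hadj⟩ => ⟨hd, hadj⟩⟩

theorem NSet_subset_of_isBipartiteWith {G : SimpleGraph V} {X T A : Set V}
    (h : G.IsBipartiteWith X T) (hA : A ⊆ T) : NSet G A ⊆ X := by
  rintro v ⟨a, ha, hav⟩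
  exact h.mem_of_mem_adj' (hA ha) hav.symm

theorem _root_.SimpleGraph.IsBipartiteWith.induce_union {G : SimpleGraph V} {X T A B : Set V}
    (h : G.IsBipartiteWith X T) (hA : A ⊆ X) (hB : B ⊆ T) :
    (G.induce (A ∪ B)).IsBipartiteWith (Subtype.val ⁻¹' A) (Subtype.val ⁻¹' B) where
  disjoint := (h.disjoint.mono hA hB).preimage _
  mem_of_adj u v huv := by
    have hX : ∀ w : ↥(A ∪ B), (w : V) ∈ X → (w : V) ∈ A := fun w hw =>
      w.2.resolve_right fun hwB => h.disjoint.notMem_of_mem_left hw (hB hwB)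
    have hT : ∀ w : ↥(A ∪ B), (w : V) ∈ T → (w : V) ∈ B := fun w hw =>
      w.2.resolve_left fun hwA => h.disjoint.notMem_of_mem_left (hA hwA) hw
    exact (h.mem_of_adj huv).imp (And.imp (hX u) (hT v)) (And.imp (hT u) (hX v))

theorem NSet_diff_NSet_subset (G : SimpleGraph V) (A B : Set V) :
    NSet G (A \ NSet G B) ⊆ NSet G A \ B := by
  rintro v ⟨a, ⟨ha, haB⟩, hav⟩
  exact ⟨⟨a, ha, hav⟩, fun hv => haB ⟨v, hv, hav.symm⟩⟩

theorem ncard_iUnion_neighborSet_induce (G : SimpleGraph V) (U : Set V) (s : Set U) :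
    (⋃ x ∈ s, (G.induce U).neighborSet x).ncard = (U ∩ NSet G (Subtype.val '' s)).ncard := by
  rw [← Set.ncard_image_of_injective _ Subtype.val_injective]
  congr 1
  ext v
  constructor
  · rintro ⟨w, hw, rfl⟩
    obtain ⟨x, hx, hxw⟩ := Set.mem_iUnion₂.mp hw
    exact ⟨w.2, x, ⟨x, hx, rfl⟩, hxw⟩
  · rintro ⟨hv, _, ⟨x, hx, rfl⟩, hxv⟩
    exact ⟨⟨v, hv⟩, Set.mem_iUnion₂.mpr ⟨x, hx, hxv⟩, rfl⟩

theorem ncard_le_ncard_inter_NSet_of_minimal [Finite V] (G : SimpleGraph V) {T A : Set V}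
    (hA : A ⊆ T) (hcard : (NSet G A).ncard < A.ncard)
    (hmin : ∀ A' : Set V, A' ⊆ T → A'.Nonempty →
      (NSet G A').ncard < A'.ncard → A.ncard ≤ A'.ncard)
    {B : Set V} (hB : B ⊆ NSet G A) : B.ncard ≤ (A ∩ NSet G B).ncard := by
  by_contra! hlt
  have hAsplit := Set.ncard_inter_add_ncard_sdiff_eq_ncard A (NSet G B)
  have hNsplit := Set.ncard_sdiff_add_ncard_of_subset hB
  have hdef : (NSet G (A \ NSet G B)).ncard ≤ (NSet G A \ B).ncard :=
    Set.ncard_le_ncard (NSet_diff_NSet_subset G A B)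
  have hA'ne : (A \ NSet G B).Nonempty := Set.nonempty_of_ncard_ne_zero (by omega)
  have hle := hmin _ (Set.sdiff_subset.trans hA) hA'ne (by omega)
  obtain ⟨b, hb⟩ := Set.nonempty_of_ncard_ne_zero (by omega : B.ncard ≠ 0)
  obtain ⟨a, ha, hab⟩ := hB hb
  have hP : 0 < (A ∩ NSet G B).ncard := (Set.ncard_pos).mpr ⟨a, ha, b, hb, hab.symm⟩
  omega

theorem vizing_stmt_17_general [Fintype V] (H : SimpleGraph V) (X T : Set V)
    (hbip : IsBipartiteWith H X T)
    (A : Set V) (hA : A ⊆ T)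
    (hcard : (NSet H A).ncard < A.ncard)
    (hmin : ∀ A' : Set V, A' ⊆ T → A'.Nonempty →
      (NSet H A').ncard < A'.ncard → A.ncard ≤ A'.ncard) :
    HasMatchingSaturating (H.induce (A ∪ NSet H A))
      (Subtype.val ⁻¹' NSet H A) := by
  classical
  rw [isBipartiteWith_iff] at hbip
  have hbipU : (H.induce (A ∪ NSet H A)).IsBipartiteWith
      (Subtype.val ⁻¹' NSet H A) (Subtype.val ⁻¹' A) :=
    (hbip.symm.induce_union hA (NSet_subset_of_isBipartiteWith hbip hA)).symm
  obtain ⟨M, hNM, hM⟩ := exists_isMatching_of_forall_ncard_le hbipU fun s hs => by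
    rw [ncard_iUnion_neighborSet_induce, ← Set.ncard_image_of_injective s Subtype.val_injective]
    calc (Subtype.val '' s).ncard
        ≤ (A ∩ NSet H (Subtype.val '' s)).ncard :=
          ncard_le_ncard_inter_NSet_of_minimal H hA hcard hmin
            (Set.image_subset_iff.mpr hs)
      _ ≤ _ := Set.ncard_le_ncard (Set.inter_subset_inter_left _ Set.subset_union_left)
  exact ⟨M, hM, hNM⟩

theorem vizing_stmt_17 [Fintype V] (H : SimpleGraph V) (X T : Set V)
    (hbip : IsBipartiteWith H X T)
    (hnoiso : ∀ y ∈ T, ∃ x : V, H.Adj y x)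
    (A : Set V) (hA : A ⊆ T) (hne : A.Nonempty)
    (hcard : (NSet H A).ncard < A.ncard)
    (hmin : ∀ A' : Set V, A' ⊆ T → A'.Nonempty →
      (NSet H A').ncard < A'.ncard → A.ncard ≤ A'.ncard) :
    HasMatchingSaturating (H.induce (A ∪ NSet H A))
      (Subtype.val ⁻¹' NSet H A) :=
  vizing_stmt_17_general H X T hbip A hA hcard hmin

end VizingTwoFactor
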